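/- Fix ω ∈ ℝ and c > 0, and define F : ℝ → ℝ by F(z) = −c ∫_{−∞}^0 g(μ + z) · (−μ)^{−1/2} dμ, where g(x) = e^{−(x−ω)²}/(1 − Φ(x−ω)) and Φ(x) = 1 − erfc(x)/2. Then F is well defined, continuous, strictly negative and nonincreasing on ℝ with F(z) → 0 as z → −∞, and the equation z = F(z) has a unique real solution z₀; moreover z₀ < 0. -/

import Mathlib

open MeasureTheory Real Filter

noncomputable def Phi (z : ℝ) : ℝ :=
  (1 / Real.sqrt π) * ∫ t in Set.Iic z, Real.exp (-t ^ 2)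

noncomputable def Fendpoint (ω c : ℝ) (z : ℝ) : ℝ :=
  -c * ∫ μ in Set.Iio (0 : ℝ),
      (Real.exp (-(μ + z - ω) ^ 2) / (1 - Phi (μ + z - ω))) * (-μ) ^ (-(1 : ℝ) / 2)

/-! Writing `1 / g(x) = π^{-1/2} ∫₀^∞ e^{-s² - 2xs} ds` shows that `g` is increasing, and
`g(x) ≤ e^{-x²} / (1 - Φ(a))` for `x ≤ a` gives its Gaussian decay at `-∞`. Hence the integrand
`g(μ + z) (-μ)^{-1/2}` is dominated by the integrand at any larger `z`, which is integrable, so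
dominated convergence gives continuity of `F` and `F → 0` at `-∞`, while positivity and
monotonicity of `g` make `F` negative and nonincreasing. A continuous nonincreasing `F` has
exactly one fixed point, which is negative because `F` is. -/

open Set

theorem exists_unique_eq_of_continuous_of_antitone {F : ℝ → ℝ} (hF_cont : Continuous F)
    (hF_anti : Antitone F) : ∃! z : ℝ, z = F z := by
  -- `z ↦ z - F z` is strictly increasing and changes sign between `0` and `F 0`.
  have hsign : (0 : ℝ) ∈ uIcc (0 - F 0) (F 0 - F (F 0)) := by
    rcases le_total (F 0) 0 with h | h
    · exact mem_uIcc.2 (Or.inr ⟨by linarith [hF_anti h], by linarith⟩)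
    · exact mem_uIcc.2 (Or.inl ⟨by linarith, by linarith [hF_anti h]⟩)
  obtain ⟨z, -, hz⟩ := intermediate_value_uIcc (continuous_id.sub hF_cont).continuousOn hsign
  have hz : z = F z := sub_eq_zero.1 hz
  refine ⟨z, hz, fun y hy => ?_⟩
  rcases le_total y z with h | h <;> linarith [hF_anti h]

lemma setIntegral_pos_of_forall_pos {X : Type*} [MeasurableSpace X] {μ : Measure X} {s : Set X}
    {f : X → ℝ} (hs : MeasurableSet s) (hμs : μ s ≠ 0) (hf : IntegrableOn f s μ)
    (hpos : ∀ x ∈ s, 0 < f x) : 0 < ∫ x in s, f x ∂μ := by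
  rw [setIntegral_pos_iff_support_of_nonneg_ae (ae_restrict_of_forall_mem hs fun x hx =>
    (hpos x hx).le) hf, inter_eq_right.2 fun x hx => Function.mem_support.2 (hpos x hx).ne']
  exact pos_iff_ne_zero.2 hμs

lemma integrable_exp_neg_sq : Integrable (fun t : ℝ => exp (-t ^ 2)) := by
  simpa using integrable_exp_neg_mul_sq one_pos

lemma one_sub_Phi_eq (x : ℝ) :
    1 - Phi x = (1 / √π) * ∫ t in Ioi x, exp (-t ^ 2) := by
  have h := intervalIntegral.integral_Iic_add_Ioi (b := x)
    integrable_exp_neg_sq.integrableOn integrable_exp_neg_sq.integrableOn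
  have hπ : √π ≠ 0 := (sqrt_pos.2 pi_pos).ne'
  rw [show ∫ t, exp (-t ^ 2) = √π by simpa using integral_gaussian 1] at h
  rw [Phi]
  field_simp
  linarith

lemma one_sub_Phi_eq_mul_integral (x : ℝ) :
    1 - Phi x = exp (-x ^ 2) / √π * ∫ s in Ioi 0, exp (-s ^ 2 - 2 * x * s) := by
  have hshift := (measurePreserving_add_right volume x).setIntegral_preimage_emb
    (measurableEmbedding_addRight x) (fun t => exp (-t ^ 2)) (Ioi x)
  rw [show (· + x) ⁻¹' Ioi x = Ioi 0 by ext; simp] at hshift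
  have hsq (s : ℝ) : exp (-(s + x) ^ 2) = exp (-x ^ 2) * exp (-s ^ 2 - 2 * x * s) := by
    rw [← exp_add]; ring_nf
  simp only [hsq, integral_const_mul] at hshift
  rw [one_sub_Phi_eq, ← hshift]
  ring

lemma one_sub_Phi_pos (x : ℝ) : 0 < 1 - Phi x := by
  rw [one_sub_Phi_eq]
  refine mul_pos (by positivity) ?_
  exact setIntegral_pos_of_forall_pos measurableSet_Ioi (by simp)
    integrable_exp_neg_sq.integrableOn fun _ _ => exp_pos _

lemma one_sub_Phi_antitone : Antitone fun x => 1 - Phi x := by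
  intro x y hxy
  simp only [one_sub_Phi_eq]
  gcongr ?_ * ?_
  exact setIntegral_mono_set integrable_exp_neg_sq.integrableOn
    (.of_forall fun _ => (exp_pos _).le) (Ioi_subset_Ioi hxy).eventuallyLE

lemma continuous_Phi : Continuous Phi := by
  have h : ∀ x, ∫ t in Iic x, exp (-t ^ 2)
      = (∫ t in Iic 0, exp (-t ^ 2)) + ∫ t in (0 : ℝ)..x, exp (-t ^ 2) := fun x => by
    rw [← intervalIntegral.integral_Iic_sub_Iic integrable_exp_neg_sq.integrableOn
      integrable_exp_neg_sq.integrableOn]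
    ring
  simp only [funext fun x => show Phi x = _ by rw [Phi, h x]]
  exact continuous_const.mul (continuous_const.add
    (intervalIntegral.continuous_primitive (fun _ _ => integrable_exp_neg_sq.intervalIntegrable) 0))

lemma integrable_exp_neg_sq_sub_mul (x : ℝ) :
    Integrable fun s : ℝ => exp (-s ^ 2 - 2 * x * s) := by
  have hsq (s : ℝ) : exp (-s ^ 2 - 2 * x * s) = exp (x ^ 2) * exp (-(s + x) ^ 2) := by
    rw [← exp_add]; ring_nf
  simpa only [hsq] using (integrable_exp_neg_sq.comp_add_right x).const_mul (exp (x ^ 2))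

-- The paper's `g` is `gaussHazard (· - ω)`.
noncomputable def gaussHazard (x : ℝ) : ℝ := exp (-x ^ 2) / (1 - Phi x)

lemma gaussHazard_pos (x : ℝ) : 0 < gaussHazard x := div_pos (exp_pos _) (one_sub_Phi_pos x)

lemma gaussHazard_le {x a : ℝ} (hxa : x ≤ a) : gaussHazard x ≤ exp (-x ^ 2) / (1 - Phi a) :=
  div_le_div_of_nonneg_left (exp_pos _).le (one_sub_Phi_pos a) (one_sub_Phi_antitone hxa)

lemma gaussHazard_monotone : Monotone gaussHazard := by
  have hg (x : ℝ) : gaussHazard x = √π / ∫ s in Ioi 0, exp (-s ^ 2 - 2 * x * s) := by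
    have hπ : √π ≠ 0 := (sqrt_pos.2 pi_pos).ne'
    rw [gaussHazard, one_sub_Phi_eq_mul_integral]
    field_simp
  intro x y hxy
  rw [hg, hg]
  refine div_le_div_of_nonneg_left (sqrt_nonneg π) ?_ ?_
  · exact setIntegral_pos_of_forall_pos measurableSet_Ioi (by simp)
      (integrable_exp_neg_sq_sub_mul y).integrableOn fun _ _ => exp_pos _
  · refine setIntegral_mono_on (integrable_exp_neg_sq_sub_mul y).integrableOn
      (integrable_exp_neg_sq_sub_mul x).integrableOn measurableSet_Ioi fun s (hs : 0 < s) => ?_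
    gcongr

lemma continuous_gaussHazard : Continuous gaussHazard :=
  (by fun_prop : Continuous fun x : ℝ => exp (-x ^ 2)).div (continuous_const.sub continuous_Phi)
    fun x => (one_sub_Phi_pos x).ne'

lemma tendsto_gaussHazard_atBot : Tendsto gaussHazard atBot (nhds 0) := by
  have hbound : Tendsto (fun x : ℝ => exp (-x ^ 2) / (1 - Phi 0)) atBot (nhds 0) := by
    have hsq : Tendsto (fun x : ℝ => -x ^ 2) atBot atBot := by
      simpa [Function.comp_def] using
        (tendsto_pow_atTop (α := ℝ) two_ne_zero).comp tendsto_neg_atBot_atTop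
    simpa using (tendsto_exp_atBot.comp hsq).div_const (1 - Phi 0)
  refine tendsto_of_tendsto_of_tendsto_of_le_of_le' tendsto_const_nhds hbound
    (.of_forall fun x => (gaussHazard_pos x).le) ?_
  filter_upwards [eventually_le_atBot 0] with x hx using gaussHazard_le hx

lemma integrableOn_gaussHazard_comp_add (z : ℝ) :
    IntegrableOn (fun μ => gaussHazard (μ + z)) (Iio 0) := by
  refine Integrable.mono' ((integrable_exp_neg_sq.comp_add_right z).div_const (1 - Phi z)).restrict
    (continuous_gaussHazard.comp (continuous_add_const z)).aestronglyMeasurable ?_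
  refine ae_restrict_of_forall_mem measurableSet_Iio fun μ (hμ : μ < 0) => ?_
  rw [norm_of_nonneg (gaussHazard_pos _).le]
  exact gaussHazard_le (by linarith)

-- `abelIntegral h / √π` is the Riemann–Liouville integral of order `1/2` of `h` from `-∞`.
noncomputable def abelIntegral (h : ℝ → ℝ) (z : ℝ) : ℝ :=
  ∫ μ in Iio 0, h (μ + z) * (-μ) ^ (-(1 : ℝ) / 2)

lemma integrableOn_neg_rpow_neg_half_Ico :
    IntegrableOn (fun μ : ℝ => (-μ) ^ (-(1 : ℝ) / 2)) (Ico (-1) 0) := by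
  have h := (IntervalIntegrable.iff_comp_neg (f := fun x : ℝ => x ^ (-(1 : ℝ) / 2))).1
    (intervalIntegral.intervalIntegrable_rpow' (a := 0) (b := 1) (by norm_num))
  rw [neg_zero] at h
  exact (intervalIntegrable_iff_integrableOn_Ico_of_le (by norm_num)).1 h.symm

lemma integrableOn_mul_neg_rpow_neg_half {f : ℝ → ℝ} {C : ℝ} (hf : IntegrableOn f (Iio 0))
    (hC : ∀ μ < 0, |f μ| ≤ C) :
    IntegrableOn (fun μ => f μ * (-μ) ^ (-(1 : ℝ) / 2)) (Iio 0) := by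
  have hw : Measurable fun μ : ℝ => (-μ) ^ (-(1 : ℝ) / 2) := by fun_prop
  rw [← Iio_union_Ico_eq_Iio (by norm_num : (-1 : ℝ) ≤ 0)]
  refine IntegrableOn.union ?_ ?_
  · refine (hf.mono_set (Iio_subset_Iio (by norm_num))).mul_bdd hw.aestronglyMeasurable
      (c := 1) (ae_restrict_of_forall_mem measurableSet_Iio fun μ (hμ : μ < -1) => ?_)
    rw [norm_of_nonneg (rpow_nonneg (by linarith) _)]
    exact rpow_le_one_of_one_le_of_nonpos (by linarith) (by norm_num)
  · refine integrableOn_neg_rpow_neg_half_Ico.bdd_mul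
      (hf.mono_set Ico_subset_Iio_self).aestronglyMeasurable
      (ae_restrict_of_forall_mem measurableSet_Ico fun μ hμ => hC μ hμ.2)

section AbelIntegral

variable {h : ℝ → ℝ}

lemma integrableOn_abelIntegrand (h_mono : Monotone h) (h_nonneg : ∀ x, 0 ≤ h x)
    {z : ℝ} (h_int : IntegrableOn (fun μ => h (μ + z)) (Iio 0)) :
    IntegrableOn (fun μ => h (μ + z) * (-μ) ^ (-(1 : ℝ) / 2)) (Iio 0) :=
  integrableOn_mul_neg_rpow_neg_half h_int fun μ hμ => by
    rw [abs_of_nonneg (h_nonneg _)]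
    exact h_mono (by linarith)

lemma abelIntegral_pos (h_pos : ∀ x, 0 < h x) (h_mono : Monotone h) {z : ℝ}
    (h_int : IntegrableOn (fun μ => h (μ + z)) (Iio 0)) : 0 < abelIntegral h z :=
  setIntegral_pos_of_forall_pos measurableSet_Iio (by simp)
    (integrableOn_abelIntegrand h_mono (fun x => (h_pos x).le) h_int)
    fun μ (hμ : μ < 0) => mul_pos (h_pos _) (rpow_pos_of_pos (by linarith) _)

lemma abelIntegral_mono (h_mono : Monotone h) (h_nonneg : ∀ x, 0 ≤ h x)
    (h_int : ∀ z, IntegrableOn (fun μ => h (μ + z)) (Iio 0)) : Monotone (abelIntegral h) :=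
  fun z z' hz => setIntegral_mono_on (integrableOn_abelIntegrand h_mono h_nonneg (h_int z))
    (integrableOn_abelIntegrand h_mono h_nonneg (h_int z')) measurableSet_Iio
    fun μ (hμ : μ < 0) => mul_le_mul_of_nonneg_right (h_mono (by linarith))
      (rpow_nonneg (by linarith) _)

lemma norm_abelIntegrand_le (h_mono : Monotone h) (h_nonneg : ∀ x, 0 ≤ h x) {z z' : ℝ}
    (hz : z ≤ z') : ∀ᵐ μ ∂volume.restrict (Iio 0),
      ‖h (μ + z) * (-μ) ^ (-(1 : ℝ) / 2)‖ ≤ h (μ + z') * (-μ) ^ (-(1 : ℝ) / 2) := by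
  refine ae_restrict_of_forall_mem measurableSet_Iio fun μ (hμ : μ < 0) => ?_
  have hw : 0 ≤ (-μ) ^ (-(1 : ℝ) / 2) := rpow_nonneg (by linarith) _
  rw [norm_of_nonneg (mul_nonneg (h_nonneg _) hw)]
  exact mul_le_mul_of_nonneg_right (h_mono (by linarith)) hw

lemma continuous_abelIntegral (h_cont : Continuous h) (h_mono : Monotone h)
    (h_nonneg : ∀ x, 0 ≤ h x) (h_int : ∀ z, IntegrableOn (fun μ => h (μ + z)) (Iio 0)) :
    Continuous (abelIntegral h) := by
  refine continuous_iff_continuousAt.2 fun z₀ => continuousAt_of_dominated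
    (.of_forall fun z => (integrableOn_abelIntegrand h_mono h_nonneg (h_int z)).1)
    ?_ (integrableOn_abelIntegrand h_mono h_nonneg (h_int (z₀ + 1)))
    (.of_forall fun μ => by fun_prop)
  filter_upwards [eventually_le_nhds (lt_add_one z₀)] with z hz
    using norm_abelIntegrand_le h_mono h_nonneg hz

lemma tendsto_abelIntegral_atBot (h_lim : Tendsto h atBot (nhds 0)) (h_mono : Monotone h)
    (h_nonneg : ∀ x, 0 ≤ h x) (h_int : ∀ z, IntegrableOn (fun μ => h (μ + z)) (Iio 0)) :
    Tendsto (abelIntegral h) atBot (nhds 0) := by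
  have h_dom := tendsto_integral_filter_of_dominated_convergence (l := atBot)
    (F := fun z μ => h (μ + z) * (-μ) ^ (-(1 : ℝ) / 2)) (f := fun _ => 0)
    (fun μ => h (μ + 0) * (-μ) ^ (-(1 : ℝ) / 2))
    (.of_forall fun z => (integrableOn_abelIntegrand h_mono h_nonneg (h_int z)).1)
    ((eventually_le_atBot 0).mono fun z hz => norm_abelIntegrand_le h_mono h_nonneg hz)
    (integrableOn_abelIntegrand h_mono h_nonneg (h_int 0))
    (.of_forall fun μ => by
      simpa using (h_lim.comp (tendsto_atBot_add_const_left atBot μ tendsto_id)).mul_const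
        ((-μ) ^ (-(1 : ℝ) / 2)))
  rwa [integral_zero] at h_dom

end AbelIntegral

lemma Fendpoint_eq_abelIntegral (ω c z : ℝ) :
    Fendpoint ω c z = -c * abelIntegral gaussHazard (z - ω) := by
  simp only [Fendpoint, abelIntegral, gaussHazard, add_sub_assoc]

theorem endpoint_equation (ω c : ℝ) (hc : 0 < c) :
    Continuous (Fendpoint ω c) ∧
    (∀ z : ℝ, Fendpoint ω c z < 0) ∧
    Antitone (Fendpoint ω c) ∧
    Tendsto (Fendpoint ω c) atBot (nhds 0) ∧
    (∃! z₀ : ℝ, z₀ = Fendpoint ω c z₀) ∧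
    (∀ z₀ : ℝ, z₀ = Fendpoint ω c z₀ → z₀ < 0) := by
  have hF : Fendpoint ω c = fun z => -c * abelIntegral gaussHazard (z - ω) :=
    funext (Fendpoint_eq_abelIntegral ω c)
  have h_nonneg (x : ℝ) : 0 ≤ gaussHazard x := (gaussHazard_pos x).le
  have hcont : Continuous (Fendpoint ω c) := hF ▸ continuous_const.mul
    ((continuous_abelIntegral continuous_gaussHazard gaussHazard_monotone h_nonneg
      integrableOn_gaussHazard_comp_add).comp (continuous_sub_right ω))
  have hneg (z : ℝ) : Fendpoint ω c z < 0 := hF ▸ mul_neg_of_neg_of_pos (neg_neg_of_pos hc)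
    (abelIntegral_pos gaussHazard_pos gaussHazard_monotone (integrableOn_gaussHazard_comp_add _))
  have hanti : Antitone (Fendpoint ω c) := fun z z' hz => hF ▸ mul_le_mul_of_nonpos_left
    (abelIntegral_mono gaussHazard_monotone h_nonneg integrableOn_gaussHazard_comp_add
      (sub_le_sub_right hz ω)) (neg_nonpos.2 hc.le)
  have htend : Tendsto (Fendpoint ω c) atBot (nhds 0) := by
    simpa [hF, ← sub_eq_add_neg] using ((tendsto_abelIntegral_atBot tendsto_gaussHazard_atBot
      gaussHazard_monotone h_nonneg integrableOn_gaussHazard_comp_add).comp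
        (tendsto_atBot_add_const_right atBot (-ω) tendsto_id)).const_mul (-c)
  exact ⟨hcont, hneg, hanti, htend, exists_unique_eq_of_continuous_of_antitone hcont hanti,
    fun z₀ hz₀ => hz₀ ▸ hneg z₀⟩
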